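/- arXiv:1405.1503 — 4 statements merged into one kernel-verified Lean document; each statement's English description precedes it below -/
import Mathlib

section
/- Let D be a probability distribution over X and p ≥ 1. If h, h', h'' : X → ℝ satisfy |h(x) - h'(x)| ≤ M and |h''(x) - h'(x)| ≤ M for all x ∈ X, then |E_{x∼D}[|h(x) - h'(x)|^p] - E_{x∼D}[|h''(x) - h'(x)|^p]| ≤ p M^{p-1} (E_{x∼D}[|h(x) - h''(x)|^p])^{1/p}. -/
open MeasureTheory

lemma aux_rpow_lip {p M : ℝ} (hp : 1 ≤ p) (hM : 0 ≤ M) {a b : ℝ}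
    (ha : a ∈ Set.Icc 0 M) (hb : b ∈ Set.Icc 0 M) :
    |a ^ p - b ^ p| ≤ p * M ^ (p - 1) * |a - b| := by
  have hd : ∀ x ∈ Set.Icc (0:ℝ) M,
      HasDerivWithinAt (fun t : ℝ => t ^ p) (p * x ^ (p - 1)) (Set.Icc 0 M) x :=
    fun x _ => (Real.hasDerivAt_rpow_const (Or.inr hp)).hasDerivWithinAt
  have bound : ∀ x ∈ Set.Icc (0:ℝ) M, ‖p * x ^ (p - 1)‖ ≤ p * M ^ (p - 1) := by
    intro x hx
    rw [Real.norm_eq_abs, abs_of_nonneg (mul_nonneg (by linarith) (Real.rpow_nonneg hx.1 _))]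
    exact mul_le_mul_of_nonneg_left
      (Real.rpow_le_rpow hx.1 hx.2 (by linarith)) (by linarith)
  simpa [Real.norm_eq_abs] using
    (convex_Icc (0:ℝ) M).norm_image_sub_le_of_norm_hasDerivWithin_le hd bound hb ha

/-- If `|h(x) - h'(x)| ≤ M` and `|h''(x) - h'(x)| ≤ M` for all `x`, then the expected
`L_p` losses satisfy
`|E[|h - h'|^p] - E[|h'' - h'|^p]| ≤ p M^(p-1) (E[|h - h''|^p])^(1/p)`. -/
theorem expected_lp_loss_diff_bound {X : Type*} [MeasurableSpace X]
    (D : Measure X) [IsProbabilityMeasure D] (p M : ℝ) (hp : 1 ≤ p) (hM : 0 ≤ M)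
    (h h' h'' : X → ℝ)
    (hmeas : Measurable h) (hmeas' : Measurable h') (hmeas'' : Measurable h'')
    (hb : ∀ x, |h x - h' x| ≤ M) (hb' : ∀ x, |h'' x - h' x| ≤ M) :
    |(∫ x, |h x - h' x| ^ p ∂D) - ∫ x, |h'' x - h' x| ^ p ∂D| ≤
      p * M ^ (p - 1) * (∫ x, |h x - h'' x| ^ p ∂D) ^ (1 / p) := by
  set C : ℝ := p * M ^ (p - 1) with hC
  have hp0 : (0:ℝ) < p := by linarith
  have hCnn : 0 ≤ C := mul_nonneg (by linarith) (Real.rpow_nonneg hM _)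
  set A : X → ℝ := fun x => |h x - h' x|
  set B : X → ℝ := fun x => |h'' x - h' x|
  set u : X → ℝ := fun x => |h x - h'' x|
  have hu2M : ∀ x, u x ≤ 2 * M := fun x => by
    have := hb x; have := hb' x
    have : |h x - h'' x| ≤ |h x - h' x| + |h'' x - h' x| := by
      have := abs_sub_abs_le_abs_sub (h x - h' x) (h'' x - h' x)
      calc |h x - h'' x| = |(h x - h' x) - (h'' x - h' x)| := by ring_nf
        _ ≤ |h x - h' x| + |h'' x - h' x| := abs_sub _ _
    simp only [u]; linarith [hb x, hb' x]
  -- integrability of bounded measurable functions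
  have int_of_bdd : ∀ (f : X → ℝ), Measurable f → ∀ K : ℝ, (∀ x, |f x| ≤ K) →
      Integrable f D := by
    intro f hf K hK
    exact (integrable_const K).mono' hf.aestronglyMeasurable
      (Filter.Eventually.of_forall fun x => by simpa using hK x)
  have hmA : Measurable A := (hmeas.sub hmeas').abs
  have hmB : Measurable B := (hmeas''.sub hmeas').abs
  have hmu : Measurable u := (hmeas.sub hmeas'').abs
  have hmAp : Measurable fun x => A x ^ p := by fun_prop
  have hmBp : Measurable fun x => B x ^ p := by fun_prop
  have hmup : Measurable fun x => u x ^ p := by fun_prop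
  have hiAp : Integrable (fun x => A x ^ p) D := by
    refine int_of_bdd _ hmAp (M ^ p) fun x => ?_
    rw [abs_of_nonneg (Real.rpow_nonneg (abs_nonneg _) _)]
    exact Real.rpow_le_rpow (abs_nonneg _) (hb x) (by linarith)
  have hiBp : Integrable (fun x => B x ^ p) D := by
    refine int_of_bdd _ hmBp (M ^ p) fun x => ?_
    rw [abs_of_nonneg (Real.rpow_nonneg (abs_nonneg _) _)]
    exact Real.rpow_le_rpow (abs_nonneg _) (hb' x) (by linarith)
  have hiu : Integrable u D :=
    int_of_bdd _ hmu (2 * M) fun x => by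
      rw [abs_of_nonneg (abs_nonneg _)]; exact hu2M x
  have hiup : Integrable (fun x => u x ^ p) D := by
    refine int_of_bdd _ hmup ((2 * M) ^ p) fun x => ?_
    rw [abs_of_nonneg (Real.rpow_nonneg (abs_nonneg _) _)]
    exact Real.rpow_le_rpow (abs_nonneg _) (hu2M x) (by linarith)
  -- pointwise bound
  have hpw : ∀ x, |A x ^ p - B x ^ p| ≤ C * u x := by
    intro x
    have h1 : |A x ^ p - B x ^ p| ≤ C * |A x - B x| :=
      aux_rpow_lip hp hM ⟨abs_nonneg _, hb x⟩ ⟨abs_nonneg _, hb' x⟩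
    have h2 : |A x - B x| ≤ u x := by
      have := abs_abs_sub_abs_le_abs_sub (h x - h' x) (h'' x - h' x)
      simpa [A, B, u, sub_sub_sub_cancel_right] using this
    exact h1.trans (mul_le_mul_of_nonneg_left h2 hCnn)
  -- step 1: |∫A^p - ∫B^p| ≤ C * ∫ u
  have step1 : |(∫ x, A x ^ p ∂D) - ∫ x, B x ^ p ∂D| ≤ C * ∫ x, u x ∂D := by
    rw [← integral_sub hiAp hiBp]
    calc |∫ x, (A x ^ p - B x ^ p) ∂D| ≤ ∫ x, |A x ^ p - B x ^ p| ∂D :=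
          by simpa [Real.norm_eq_abs] using
            norm_integral_le_integral_norm (μ := D) fun x => A x ^ p - B x ^ p
      _ ≤ ∫ x, C * u x ∂D := by
          refine integral_mono ((hiAp.sub hiBp).abs) (hiu.const_mul C) fun x => hpw x
      _ = C * ∫ x, u x ∂D := integral_const_mul C _
  -- step 2: ∫ u ≤ (∫ u^p)^(1/p) by Jensen
  have hjensen : (∫ x, u x ∂D) ^ p ≤ ∫ x, u x ^ p ∂D := by
    have hconv : ConvexOn ℝ (Set.Ici 0) fun t : ℝ => t ^ p := convexOn_rpow hp
    have hcont : ContinuousOn (fun t : ℝ => t ^ p) (Set.Ici 0) := fun t _ =>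
      (Real.continuousAt_rpow_const t p (Or.inr (by linarith))).continuousWithinAt
    exact hconv.map_integral_le hcont isClosed_Ici
      (Filter.Eventually.of_forall fun x => Set.mem_Ici.2 (abs_nonneg _)) hiu hiup
  have hintu_nn : 0 ≤ ∫ x, u x ∂D := integral_nonneg fun x => abs_nonneg _
  have step2 : (∫ x, u x ∂D) ≤ (∫ x, u x ^ p ∂D) ^ (1 / p) := by
    have h3 := Real.rpow_le_rpow (Real.rpow_nonneg hintu_nn p) hjensen
      (le_of_lt (by positivity : (0:ℝ) < 1 / p))
    rwa [← Real.rpow_mul hintu_nn, mul_one_div, div_self (ne_of_gt hp0),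
      Real.rpow_one] at h3
  calc |(∫ x, A x ^ p ∂D) - ∫ x, B x ^ p ∂D| ≤ C * ∫ x, u x ∂D := step1
    _ ≤ C * (∫ x, u x ^ p ∂D) ^ (1 / p) := mul_le_mul_of_nonneg_left step2 hCnn
end

section
/- Let F, G : H → ℝ be convex functions on a real inner product space H, with F(h) = λ‖h‖² + G_P(h) and G(h) = λ‖h‖² + G_U(h), where G_P is convex differentiable and G_U is convex, λ > 0. If h* is a minimizer of F and h_U is a minimizer of G, then λ‖h* - h_U‖² ≤ max_{h ∈ {h*, h_U}} |G_P(h) - G_U(h)|; more precisely, 2λ‖h* - h_U‖² ≤ (G_U(h*) - G_U(h_U)) + (G_P(h_U) - G_P(h*)) ≤ 2 sup_{h ∈ H} |G_P(h) - G_U(h)|. -/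
/-!
Both objectives are `2λ`-strongly convex, so each exceeds its minimum by at least
`λ‖h - minimizer‖²`. Evaluating `F` at `h_U` and `G` at `h*` and adding, the `λ‖·‖²` terms cancel
and `2λ‖h* - h_U‖²` is bounded by `(G_U - G_P)(h*) + (G_P - G_U)(h_U)`.
-/

open Filter Set Topology

lemma le_of_forall_mem_Ioo_one_sub_mul_le {a b : ℝ} (h : ∀ t ∈ Ioo (0 : ℝ) 1, (1 - t) * a ≤ b) :
    a ≤ b := by
  have hlim : Tendsto (fun t : ℝ => (1 - t) * a) (𝓝[>] 0) (𝓝 a) := by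
    have hcont : Continuous fun t : ℝ => (1 - t) * a := by fun_prop
    simpa using (hcont.tendsto 0).mono_left nhdsWithin_le_nhds
  refine le_of_tendsto hlim ?_
  filter_upwards [Ioo_mem_nhdsGT (zero_lt_one' ℝ)] with t ht using h t ht

section StrongConvexOn

variable {E : Type*} [NormedAddCommGroup E] [InnerProductSpace ℝ E]

lemma ConvexOn.strongConvexOn_mul_norm_sq_add {s : Set E} {g : E → ℝ} (hg : ConvexOn ℝ s g)
    (lam : ℝ) : StrongConvexOn s (2 * lam) fun x => lam * ‖x‖ ^ 2 + g x := by
  rw [strongConvexOn_iff_convex]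
  convert hg using 2
  ring

lemma StrongConvexOn.mul_norm_sub_sq_le_of_isMinOn {s : Set E} {m : ℝ} {f : E → ℝ} {x y : E}
    (hf : StrongConvexOn s m f) (hmin : IsMinOn f s x) (hx : x ∈ s) (hy : y ∈ s) :
    m / 2 * ‖y - x‖ ^ 2 ≤ f y - f x := by
  refine le_of_forall_mem_Ioo_one_sub_mul_le fun t ⟨ht0, ht1⟩ => ?_
  have hseg := hf.2 hy hx ht0.le (sub_nonneg.2 ht1.le) (add_sub_cancel t 1)
  have hmin_seg : f x ≤ f (t • y + (1 - t) • x) :=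
    hmin (hf.1 hy hx ht0.le (sub_nonneg.2 ht1.le) (add_sub_cancel t 1))
  simp only [smul_eq_mul] at hseg
  -- `f x ≤ t f y + (1 - t) f x - t (1 - t) (m/2) ‖y - x‖²`; divide by `t`
  refine le_of_mul_le_mul_left ?_ ht0
  nlinarith

end StrongConvexOn

theorem regularized_minimizers_distance_bound_general
    {H : Type*} [NormedAddCommGroup H] [InnerProductSpace ℝ H]
    (lam : ℝ) (GP GU : H → ℝ)
    (hGPconv : ConvexOn ℝ Set.univ GP)
    (hGUconv : ConvexOn ℝ Set.univ GU)
    (hstar hU : H)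
    (hmin : ∀ h : H, lam * ‖hstar‖ ^ 2 + GP hstar ≤ lam * ‖h‖ ^ 2 + GP h)
    (hminU : ∀ h : H, lam * ‖hU‖ ^ 2 + GU hU ≤ lam * ‖h‖ ^ 2 + GU h)
    (C : ℝ) (hC : ∀ h : H, |GP h - GU h| ≤ C) :
    2 * lam * ‖hstar - hU‖ ^ 2 ≤ (GU hstar - GU hU) + (GP hU - GP hstar) ∧
    (GU hstar - GU hU) + (GP hU - GP hstar) ≤ 2 * C ∧
    lam * ‖hstar - hU‖ ^ 2 ≤ max |GP hstar - GU hstar| |GP hU - GU hU| := by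
  have hF := (hGPconv.strongConvexOn_mul_norm_sq_add lam).mul_norm_sub_sq_le_of_isMinOn
    (fun h _ => hmin h) (mem_univ hstar) (mem_univ hU)
  have hG := (hGUconv.strongConvexOn_mul_norm_sq_add lam).mul_norm_sub_sq_le_of_isMinOn
    (fun h _ => hminU h) (mem_univ hU) (mem_univ hstar)
  rw [norm_sub_rev, mul_div_cancel_left₀ lam two_ne_zero] at hF
  rw [mul_div_cancel_left₀ lam two_ne_zero] at hG
  have hmain : 2 * lam * ‖hstar - hU‖ ^ 2 ≤ (GU hstar - GU hU) + (GP hU - GP hstar) := by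
    linarith
  refine ⟨hmain, ?_, ?_⟩
  · linarith [(abs_le.1 (hC hstar)).1, (abs_le.1 (hC hU)).2]
  · linarith [neg_abs_le (GP hstar - GU hstar), le_abs_self (GP hU - GU hU),
      le_max_left |GP hstar - GU hstar| |GP hU - GU hU|,
      le_max_right |GP hstar - GU hstar| |GP hU - GU hU|]

/-- If `h*` minimizes `F(h) = λ‖h‖² + G_P(h)` and `h_U` minimizes
`G(h) = λ‖h‖² + G_U(h)`, with `G_P` convex differentiable and `G_U` convex, then
`2λ‖h* - h_U‖² ≤ (G_U(h*) - G_U(h_U)) + (G_P(h_U) - G_P(h*)) ≤ 2 sup_h |G_P(h) - G_U(h)|`,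
the supremum being expressed through a uniform bound `C`. -/
theorem regularized_minimizers_distance_bound
    {H : Type*} [NormedAddCommGroup H] [InnerProductSpace ℝ H] [CompleteSpace H]
    (lam : ℝ) (hlam : 0 < lam) (GP GU : H → ℝ)
    (hGPconv : ConvexOn ℝ Set.univ GP) (hGPdiff : Differentiable ℝ GP)
    (hGUconv : ConvexOn ℝ Set.univ GU)
    (hstar hU : H)
    (hmin : ∀ h : H, lam * ‖hstar‖ ^ 2 + GP hstar ≤ lam * ‖h‖ ^ 2 + GP h)
    (hminU : ∀ h : H, lam * ‖hU‖ ^ 2 + GU hU ≤ lam * ‖h‖ ^ 2 + GU h)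
    (C : ℝ) (hC : ∀ h : H, |GP h - GU h| ≤ C) :
    2 * lam * ‖hstar - hU‖ ^ 2 ≤ (GU hstar - GU hU) + (GP hU - GP hstar) ∧
    (GU hstar - GU hU) + (GP hU - GP hstar) ≤ 2 * C ∧
    lam * ‖hstar - hU‖ ^ 2 ≤ max |GP hstar - GU hstar| |GP hU - GU hU| :=
  regularized_minimizers_distance_bound_general lam GP GU hGPconv hGUconv hstar hU hmin hminU C hC
end

section
/- Let L be jointly convex in both arguments, P̂ a finitely supported probability distribution on X, and H'' a nonempty convex subset of a vector space of functions X → ℝ. Then the function h ↦ max_{h'' ∈ H''} E_{x∼P̂}[L(h(x), h''(x))] + min_{h'' ∈ H''} E_{x∼P̂}[L(h(x), h''(x))] is convex (assuming the max and min are attained, e.g. H'' compact). -/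
open Finset

/-- For a jointly convex loss `L`, a finitely supported distribution `P̂` (finite
set `S` with weights `w`), and a nonempty convex set `H''` of surrogate hypotheses
on which the max and min of `h'' ↦ L_{P̂}(h, h'')` are attained, the function
`h ↦ max_{h''∈H''} L_{P̂}(h, h'') + min_{h''∈H''} L_{P̂}(h, h'')` is convex. -/
theorem gdm_objective_convex {X : Type*}
    (L : ℝ → ℝ → ℝ) (hL : ConvexOn ℝ Set.univ (fun q : ℝ × ℝ => L q.1 q.2))
    (S : Finset X) (w : X → ℝ) (hw : ∀ x ∈ S, 0 ≤ w x) (hw1 : ∑ x ∈ S, w x = 1)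
    (H'' : Set (X → ℝ)) (hne : H''.Nonempty) (hconv : Convex ℝ H'')
    (hmax : ∀ h : X → ℝ, ∃ g ∈ H'',
      IsGreatest ((fun h'' => ∑ x ∈ S, w x * L (h x) (h'' x)) '' H'')
        (∑ x ∈ S, w x * L (h x) (g x)))
    (hmin : ∀ h : X → ℝ, ∃ g ∈ H'',
      IsLeast ((fun h'' => ∑ x ∈ S, w x * L (h x) (h'' x)) '' H'')
        (∑ x ∈ S, w x * L (h x) (g x))) :
    ConvexOn ℝ Set.univ (fun h : X → ℝ =>
      sSup ((fun h'' => ∑ x ∈ S, w x * L (h x) (h'' x)) '' H'') +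
      sInf ((fun h'' => ∑ x ∈ S, w x * L (h x) (h'' x)) '' H'')) := by
  set F : (X → ℝ) → (X → ℝ) → ℝ := fun h g => ∑ x ∈ S, w x * L (h x) (g x) with hF
  refine ⟨convex_univ, ?_⟩
  intro h₁ _ h₂ _ a b ha hb hab
  have key : ∀ (h h' g g' : X → ℝ),
      F (a • h + b • h') (a • g + b • g') ≤ a * F h g + b * F h' g' := by
    intro h h' g g'
    simp only [hF, Finset.mul_sum, ← Finset.sum_add_distrib]
    apply Finset.sum_le_sum
    intro x hx
    have hc := hL.2 (Set.mem_univ ((h x, g x))) (Set.mem_univ ((h' x, g' x))) ha hb hab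
    simp only [Prod.smul_mk, Prod.mk_add_mk, smul_eq_mul] at hc
    have hwx := hw x hx
    calc w x * L ((a • h + b • h') x) ((a • g + b • g') x)
        = w x * L (a * h x + b * h' x) (a * g x + b * g' x) := by
          simp [Pi.add_apply, Pi.smul_apply, smul_eq_mul]
      _ ≤ w x * (a * L (h x) (g x) + b * L (h' x) (g' x)) :=
          mul_le_mul_of_nonneg_left hc hwx
      _ = a * (w x * L (h x) (g x)) + b * (w x * L (h' x) (g' x)) := by ring
  obtain ⟨gM, hgM, hgMmax⟩ := hmax (a • h₁ + b • h₂)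
  obtain ⟨gm, hgm, hgmmin⟩ := hmin (a • h₁ + b • h₂)
  obtain ⟨G₁, hG1, hG1max⟩ := hmax h₁
  obtain ⟨G₂, hG2, hG2max⟩ := hmax h₂
  obtain ⟨g₁, hg1, hg1min⟩ := hmin h₁
  obtain ⟨g₂, hg2, hg2min⟩ := hmin h₂
  simp only [smul_eq_mul]
  rw [hgMmax.csSup_eq, hgmmin.csInf_eq, hG1max.csSup_eq, hG2max.csSup_eq,
    hg1min.csInf_eq, hg2min.csInf_eq]
  have hsup : F (a • h₁ + b • h₂) gM ≤ a * F h₁ G₁ + b * F h₂ G₂ := by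
    have hcomb : a • gM + b • gM = gM := by
      funext x; simp only [Pi.add_apply, Pi.smul_apply, smul_eq_mul]; rw [← add_mul, hab, one_mul]
    calc F (a • h₁ + b • h₂) gM = F (a • h₁ + b • h₂) (a • gM + b • gM) := by rw [hcomb]
      _ ≤ a * F h₁ gM + b * F h₂ gM := key _ _ _ _
      _ ≤ a * F h₁ G₁ + b * F h₂ G₂ := by
          have h1 : F h₁ gM ≤ F h₁ G₁ := hG1max.2 ⟨gM, hgM, rfl⟩
          have h2 : F h₂ gM ≤ F h₂ G₂ := hG2max.2 ⟨gM, hgM, rfl⟩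
          have := mul_le_mul_of_nonneg_left h1 ha
          have := mul_le_mul_of_nonneg_left h2 hb
          linarith
  have hinf : F (a • h₁ + b • h₂) gm ≤ a * F h₁ g₁ + b * F h₂ g₂ := by
    have hmem : a • g₁ + b • g₂ ∈ H'' := hconv hg1 hg2 ha hb hab
    calc F (a • h₁ + b • h₂) gm ≤ F (a • h₁ + b • h₂) (a • g₁ + b • g₂) :=
          hgmmin.2 ⟨a • g₁ + b • g₂, hmem, rfl⟩
      _ ≤ a * F h₁ g₁ + b * F h₂ g₂ := key _ _ _ _
  linarith
end

section
/- For any h ∈ H, and L_p loss with boundedness constant M, |L_q(h, h'') − L_q(h, f_Q)| ≤ p M^{p−1} [L_q(h'', f_Q)]^{1/p}, and consequently max_{h''∈H''} |L_q(h, h'') − L_q(h, f_Q)| ≤ p M^{p−1} r whenever L_q(h'', f_Q) ≤ r^p for all h'' ∈ H''. -/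
/-!
On `[0, M]` the map `t ↦ t ^ p` is Lipschitz with constant `p M^(p-1)` (mean value theorem), and
`||h - h''| - |h - f_Q|| ≤ |h'' - f_Q|`, so the two losses differ by at most `p M^(p-1)` times the
`L_1` distance between `h''` and `f_Q`. By Jensen's inequality for the probability weights `q`,
that `L_1` distance is at most the `L_p` distance `L_q(h'', f_Q)^(1/p)`, which is at most `r`.
-/

open Finset Set

theorem abs_rpow_sub_rpow_le {p M a b : ℝ} (hp : 1 ≤ p) (ha : a ∈ Icc 0 M) (hb : b ∈ Icc 0 M) :
    |a ^ p - b ^ p| ≤ p * M ^ (p - 1) * |a - b| := by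
  have hderiv : ∀ t ∈ Icc 0 M,
      HasDerivWithinAt (fun t : ℝ ↦ t ^ p) (p * t ^ (p - 1)) (Icc 0 M) t :=
    fun t _ ↦ (Real.hasDerivAt_rpow_const (Or.inr hp)).hasDerivWithinAt
  have hbound : ∀ t ∈ Icc 0 M, ‖p * t ^ (p - 1)‖ ≤ p * M ^ (p - 1) := fun t ht ↦ by
    rw [Real.norm_of_nonneg (by have := ht.1; positivity)]
    exact mul_le_mul_of_nonneg_left (Real.rpow_le_rpow ht.1 ht.2 (by linarith)) (by linarith)
  exact (convex_Icc 0 M).norm_image_sub_le_of_norm_hasDerivWithin_le hderiv hbound hb ha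

section WeightedLp

variable {X : Type*} (S : Finset X) (q : X → ℝ) (p : ℝ)

noncomputable def weightedLpLoss (f g : X → ℝ) : ℝ :=
  ∑ x ∈ S, q x * |f x - g x| ^ p

variable {S q p}

theorem weightedLpLoss_nonneg (hq : ∀ x ∈ S, 0 ≤ q x) (f g : X → ℝ) :
    0 ≤ weightedLpLoss S q p f g :=
  sum_nonneg fun x hx ↦ mul_nonneg (hq x hx) (by positivity)

theorem abs_weightedLpLoss_sub_le {M : ℝ} {f g k : X → ℝ} (hq : ∀ x ∈ S, 0 ≤ q x) (hp : 1 ≤ p)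
    (hg : ∀ x ∈ S, |f x - g x| ≤ M) (hk : ∀ x ∈ S, |f x - k x| ≤ M) :
    |weightedLpLoss S q p f g - weightedLpLoss S q p f k| ≤
      p * M ^ (p - 1) * ∑ x ∈ S, q x * |g x - k x| := by
  have hpointwise : ∀ x ∈ S, |q x * |f x - g x| ^ p - q x * |f x - k x| ^ p| ≤
      q x * (p * M ^ (p - 1) * |g x - k x|) := fun x hx ↦ by
    rw [← mul_sub, abs_mul, abs_of_nonneg (hq x hx)]
    gcongr
    · exact hq x hx
    refine (abs_rpow_sub_rpow_le hp ⟨abs_nonneg _, hg x hx⟩ ⟨abs_nonneg _, hk x hx⟩).trans ?_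
    have hM : 0 ≤ M := (abs_nonneg _).trans (hg x hx)
    gcongr p * M ^ (p - 1) * ?_
    simpa [abs_sub_comm] using abs_abs_sub_abs_le_abs_sub (f x - g x) (f x - k x)
  calc |weightedLpLoss S q p f g - weightedLpLoss S q p f k|
      ≤ ∑ x ∈ S, |q x * |f x - g x| ^ p - q x * |f x - k x| ^ p| := by
        rw [weightedLpLoss, weightedLpLoss, ← sum_sub_distrib]
        exact abs_sum_le_sum_abs _ _
    _ ≤ ∑ x ∈ S, q x * (p * M ^ (p - 1) * |g x - k x|) := sum_le_sum hpointwise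
    _ = p * M ^ (p - 1) * ∑ x ∈ S, q x * |g x - k x| := by
        rw [mul_sum]
        exact sum_congr rfl fun x _ ↦ by ring

theorem sum_mul_abs_sub_le_weightedLpLoss_rpow (hq : ∀ x ∈ S, 0 ≤ q x)
    (hq1 : ∑ x ∈ S, q x = 1) (hp : 1 ≤ p) (g k : X → ℝ) :
    ∑ x ∈ S, q x * |g x - k x| ≤ weightedLpLoss S q p g k ^ (1 / p) :=
  Real.arith_mean_le_rpow_mean S q _ hq hq1 (fun _ _ ↦ abs_nonneg _) hp

theorem abs_weightedLpLoss_sub_le_rpow {M : ℝ} {f g k : X → ℝ} (hq : ∀ x ∈ S, 0 ≤ q x)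
    (hq1 : ∑ x ∈ S, q x = 1) (hp : 1 ≤ p) (hM : 0 ≤ M)
    (hg : ∀ x ∈ S, |f x - g x| ≤ M) (hk : ∀ x ∈ S, |f x - k x| ≤ M) :
    |weightedLpLoss S q p f g - weightedLpLoss S q p f k| ≤
      p * M ^ (p - 1) * weightedLpLoss S q p g k ^ (1 / p) := by
  refine (abs_weightedLpLoss_sub_le hq hp hg hk).trans ?_
  have hp0 : 0 ≤ p := by linarith
  gcongr
  exact sum_mul_abs_sub_le_weightedLpLoss_rpow hq hq1 hp g k

end WeightedLp

theorem lq_diff_bound_general {X : Type*} (S : Finset X)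
    (q : X → ℝ) (hq : ∀ x ∈ S, 0 ≤ q x) (hq1 : ∑ x ∈ S, q x = 1)
    (p M r : ℝ) (hp : 1 ≤ p) (hM : 0 < M) (hrpos : 0 ≤ r)
    (h fQ : X → ℝ) (H'' : Set (X → ℝ))
    (Lq : (X → ℝ) → (X → ℝ) → ℝ)
    (hLq : ∀ f g : X → ℝ, Lq f g = ∑ x ∈ S, q x * |f x - g x| ^ p)
    (hbound : ∀ h'' ∈ H'', ∀ x ∈ S, |h x - h'' x| ≤ M)
    (hboundQ : ∀ x ∈ S, |h x - fQ x| ≤ M)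
    (hr : ∀ h'' ∈ H'', Lq h'' fQ ≤ r ^ p) :
    (∀ h'' ∈ H'',
      |Lq h h'' - Lq h fQ| ≤ p * M ^ (p - 1) * (Lq h'' fQ) ^ (1 / p)) ∧
    (∀ h'' ∈ H'', |Lq h h'' - Lq h fQ| ≤ p * M ^ (p - 1) * r) := by
  obtain rfl : Lq = weightedLpLoss S q p := funext₂ hLq
  have hdiff : ∀ h'' ∈ H'', |weightedLpLoss S q p h h'' - weightedLpLoss S q p h fQ| ≤
      p * M ^ (p - 1) * weightedLpLoss S q p h'' fQ ^ (1 / p) :=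
    fun h'' hh'' ↦ abs_weightedLpLoss_sub_le_rpow hq hq1 hp hM.le (hbound h'' hh'') hboundQ
  refine ⟨hdiff, fun h'' hh'' ↦ (hdiff h'' hh'').trans ?_⟩
  have hp0 : 0 < p := by linarith
  have hloss_root : weightedLpLoss S q p h'' fQ ^ (1 / p) ≤ r := by
    rw [one_div, Real.rpow_inv_le_iff_of_pos (weightedLpLoss_nonneg hq _ _) hrpos hp0]
    exact hr h'' hh''
  gcongr

/-- For the `L_p` loss with boundedness constant `M`:
`|L_q(h,h'') − L_q(h,f_Q)| ≤ p M^(p−1) [L_q(h'',f_Q)]^(1/p)`, and consequently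
`|L_q(h,h'') − L_q(h,f_Q)| ≤ p M^(p−1) r` for every `h'' ∈ H''` whenever
`L_q(h'',f_Q) ≤ r^p` on `H''`. -/
theorem lq_diff_bound {X : Type*} (S : Finset X)
    (q : X → ℝ) (hq : ∀ x ∈ S, 0 ≤ q x) (hq1 : ∑ x ∈ S, q x = 1)
    (p M r : ℝ) (hp : 1 ≤ p) (hM : 0 < M) (hrpos : 0 ≤ r)
    (h fQ : X → ℝ) (H'' : Set (X → ℝ))
    (Lq : (X → ℝ) → (X → ℝ) → ℝ)
    (hLq : ∀ f g : X → ℝ, Lq f g = ∑ x ∈ S, q x * |f x - g x| ^ p)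
    (hbound : ∀ h'' ∈ H'', ∀ x ∈ S, |h x - h'' x| ≤ M)
    (hboundQ : ∀ x ∈ S, |h x - fQ x| ≤ M)
    (hbound'' : ∀ h'' ∈ H'', ∀ x ∈ S, |h'' x - fQ x| ≤ M)
    (hr : ∀ h'' ∈ H'', Lq h'' fQ ≤ r ^ p) :
    (∀ h'' ∈ H'',
      |Lq h h'' - Lq h fQ| ≤ p * M ^ (p - 1) * (Lq h'' fQ) ^ (1 / p)) ∧
    (∀ h'' ∈ H'', |Lq h h'' - Lq h fQ| ≤ p * M ^ (p - 1) * r) :=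
  lq_diff_bound_general S q hq hq1 p M r hp hM hrpos h fQ H'' Lq hLq hbound hboundQ hr
end
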